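/- C is negation inconsistent (provable contradictions): for every formula A, both the sequent ⇒ (A ∧ ∼A) → A and the sequent ⇒ ∼((A ∧ ∼A) → A) are derivable in G3C; that is, both the formula (A ∧ ∼A) → A and its strong negation are theorems of the connexive logic C. -/

import Mathlib

/-- Formulas of the connexive logic C: propositional variables, strong
negation `∼`, conjunction, disjunction and implication. -/
inductive Formula : Type
  | var : Nat → Formula
  | snot : Formula → Formula
  | and : Formula → Formula → Formula
  | or : Formula → Formula → Formula
  | imp : Formula → Formula → Formula
deriving DecidableEq
/-- Derivability of sequents `Γ ⇒ A` (with `Γ` a finite multiset of formulas)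
in the sequent calculus `G3C` for the connexive logic `C`. -/
inductive Gder : Multiset Formula → Formula → Prop
  | ax {Γ n} : Gder (.var n ::ₘ Γ) (.var n)
  | axSnot {Γ n} : Gder (.snot (.var n) ::ₘ Γ) (.snot (.var n))
  | andR {Γ A B} : Gder Γ A → Gder Γ B → Gder Γ (.and A B)
  | andL {Γ A B C} : Gder (A ::ₘ B ::ₘ Γ) C → Gder (.and A B ::ₘ Γ) C
  | orR₁ {Γ A B} : Gder Γ A → Gder Γ (.or A B)
  | orR₂ {Γ A B} : Gder Γ B → Gder Γ (.or A B)
  | orL {Γ A B C} : Gder (A ::ₘ Γ) C → Gder (B ::ₘ Γ) C → Gder (.or A B ::ₘ Γ) C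
  | impR {Γ A B} : Gder (A ::ₘ Γ) B → Gder Γ (.imp A B)
  | impL {Γ A B C} : Gder (.imp A B ::ₘ Γ) A → Gder (B ::ₘ Γ) C → Gder (.imp A B ::ₘ Γ) C
  | snotSnotR {Γ A} : Gder Γ A → Gder Γ (.snot (.snot A))
  | snotSnotL {Γ A C} : Gder (A ::ₘ Γ) C → Gder (.snot (.snot A) ::ₘ Γ) C
  | snotAndR₁ {Γ A B} : Gder Γ (.snot A) → Gder Γ (.snot (.and A B))
  | snotAndR₂ {Γ A B} : Gder Γ (.snot B) → Gder Γ (.snot (.and A B))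
  | snotAndL {Γ A B C} : Gder (.snot A ::ₘ Γ) C → Gder (.snot B ::ₘ Γ) C →
      Gder (.snot (.and A B) ::ₘ Γ) C
  | snotOrR {Γ A B} : Gder Γ (.snot A) → Gder Γ (.snot B) → Gder Γ (.snot (.or A B))
  | snotOrL {Γ A B C} : Gder (.snot A ::ₘ .snot B ::ₘ Γ) C → Gder (.snot (.or A B) ::ₘ Γ) C
  | snotImpR {Γ A B} : Gder (A ::ₘ Γ) (.snot B) → Gder Γ (.snot (.imp A B))
  | snotImpL {Γ A B C} : Gder (.snot (.imp A B) ::ₘ Γ) A → Gder (.snot B ::ₘ Γ) C →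
      Gder (.snot (.imp A B) ::ₘ Γ) C

/- The negated cases recurse on `∼B`, which is smaller than, though not a subterm of, `∼(B ∘ C)`. -/
theorem Gder.of_mem : ∀ {A : Formula} {Γ : Multiset Formula}, A ∈ Γ → Gder Γ A
  | .var _, _, h => by
      obtain ⟨Δ, rfl⟩ := Multiset.exists_cons_of_mem h
      exact .ax
  | .and _ _, _, h => by
      obtain ⟨Δ, rfl⟩ := Multiset.exists_cons_of_mem h
      exact .andL (.andR (of_mem (by simp)) (of_mem (by simp)))
  | .or _ _, _, h => by
      obtain ⟨Δ, rfl⟩ := Multiset.exists_cons_of_mem h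
      exact .orL (.orR₁ (of_mem (by simp))) (.orR₂ (of_mem (by simp)))
  | .imp _ _, _, h => by
      obtain ⟨Δ, rfl⟩ := Multiset.exists_cons_of_mem h
      refine .impR ?_
      rw [Multiset.cons_swap]
      exact .impL (of_mem (by simp)) (of_mem (by simp))
  | .snot (.var _), _, h => by
      obtain ⟨Δ, rfl⟩ := Multiset.exists_cons_of_mem h
      exact .axSnot
  | .snot (.snot _), _, h => by
      obtain ⟨Δ, rfl⟩ := Multiset.exists_cons_of_mem h
      exact .snotSnotL (.snotSnotR (of_mem (by simp)))
  | .snot (.and _ _), _, h => by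
      obtain ⟨Δ, rfl⟩ := Multiset.exists_cons_of_mem h
      exact .snotAndL (.snotAndR₁ (of_mem (by simp))) (.snotAndR₂ (of_mem (by simp)))
  | .snot (.or _ _), _, h => by
      obtain ⟨Δ, rfl⟩ := Multiset.exists_cons_of_mem h
      exact .snotOrL (.snotOrR (of_mem (by simp)) (of_mem (by simp)))
  | .snot (.imp _ _), _, h => by
      obtain ⟨Δ, rfl⟩ := Multiset.exists_cons_of_mem h
      refine .snotImpR ?_
      rw [Multiset.cons_swap]
      exact .snotImpL (of_mem (by simp)) (of_mem (by simp))

/-- `C` is negation inconsistent: for every formula `A`, both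
`(A ∧ ∼A) → A` and its strong negation `∼((A ∧ ∼A) → A)` are theorems of `C`,
i.e. derivable in `G3C` from the empty antecedent. -/
theorem C_provable_contradiction (A : Formula) :
    Gder 0 (.imp (.and A (.snot A)) A) ∧ Gder 0 (.snot (.imp (.and A (.snot A)) A)) :=
  ⟨.impR (.andL (.of_mem (by simp))), .snotImpR (.andL (.of_mem (by simp)))⟩
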